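/- arXiv:math/0305282 — 3 statements merged into one kernel-verified Lean document; each statement's English description precedes it below -/
import Mathlib

section
/- Let Y, T, S be types, let α : Y → Y be a function with no fixed point, and let β : T → S be a function with a right inverse β̄ : S → T (i.e., β ∘ β̄ = id on S). Then for every function f : T × S → Y, the function g : T → Y defined by g t = α (f (t, β t)) is not representable by f: for every s : S, g ≠ (fun x => f (x, s)). -/
theorem generalized_cantor_not_representable {Y T S : Type*} (α : Y → Y)
    (hα : ∀ y : Y, α y ≠ y) (β : T → S) (βbar : S → T)
    (hβ : ∀ s : S, β (βbar s) = s) (f : T × S → Y) :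
    ∀ s : S, (fun t => α (f (t, β t))) ≠ (fun x => f (x, s)) := by
  intro s h
  have := congrFun h (βbar s)
  simp only [hβ s] at this
  exact hα _ this
end

section
/- Let Y and T be types, f : T × T → Y a function, and α : Y → Y a function. If the particular function g : T → Y defined by g t = α (f (t, t)) is representable by f, i.e., there exists t₀ : T with g = (fun x => f (x, t₀)), then α has a fixed point; explicitly, f (t₀, t₀) is a fixed point of α. -/
theorem diagonal_fixed_point_explicit {Y T : Type*} (f : T × T → Y) (α : Y → Y)
    (t₀ : T) (h : (fun t => α (f (t, t))) = fun x => f (x, t₀)) :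
    α (f (t₀, t₀)) = f (t₀, t₀) := by
  exact congrFun h t₀
end

section
/- (Yablo's non-self-referential liar paradox.) There is no sequence of propositions S : ℕ → Prop such that for every n : ℕ, S n holds if and only if for all k > n, S k does not hold. That is, ¬ ∃ S : ℕ → Prop, ∀ n, (S n ↔ ∀ k, k > n → ¬ S k). -/
theorem yablo_paradox :
    ¬ ∃ S : ℕ → Prop, ∀ n : ℕ, (S n ↔ ∀ k, k > n → ¬ S k) := by
  rintro ⟨S, h⟩
  have hn : ∀ n, ¬ S n := by
    intro n hSn
    have hall := (h n).mp hSn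
    exact hall (n+1) (Nat.lt_succ_self n)
      ((h (n+1)).mpr fun k hk => hall k (Nat.lt_trans (Nat.lt_succ_self n) hk))
  exact hn 0 ((h 0).mpr fun k hk => hn k)
end
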